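/- arXiv:1007.1486 — 2 statements merged into one kernel-verified Lean document; each statement's English description precedes it below -/
import Mathlib

section
/- Let T, T̂ : M → M be measurable maps on a compact metric measure space (M, ν), ρ ∈ L¹(M,ν) positive, and C a countable dense subset of C(M). If for all f, g ∈ C, ∫_M f(T̂(x)) g(x) ν(dx) = ∫_M f(x) g(T(x)) ρ(x) ν(dx), then T̂ is a ν-a.e. inverse of T (T^{-1} = T̂ ν-a.e.), and the image measures satisfy ν ∘ T^{-1} = ρ ν and ν ∘ T = ρ^{-1}(T^{-1}) ν. -/
/-!
The duality identity says that the couplings `ν.map (T̂, id)` and `(ρ ν).map (id, T)` of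
`M × M` integrate every `f ⊗ g` with `f, g ∈ C` alike. Both sides depend continuously on
`(f, g)` for the sup norm, so this holds on all of `C(M)`, and the functions `f ⊗ g` determine
a finite measure on `M × M`: the two couplings coincide. The first is carried by the graph of
`T̂`, the second by the graph of `T`, whence `T ∘ T̂ = id` `ν`-a.e. and `T̂ ∘ T = id` `ρ ν`-a.e.,
hence `ν`-a.e. as `ρ > 0`. The marginals give `ν ∘ T̂⁻¹ = ρ ν` and `(ρ ν) ∘ T⁻¹ = ν`; pushing
`ν = ρ⁻¹ (ρ ν)` forward by `T` and using `T̂ ∘ T = id` gives `ν ∘ T⁻¹ = ρ⁻¹(T̂) ν`.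
-/

open MeasureTheory
open scoped ENNReal

lemma ContinuousMap.continuous_integral {Z : Type*} [TopologicalSpace Z] [CompactSpace Z]
    [MeasurableSpace Z] [OpensMeasurableSpace Z] (μ : Measure Z) [IsFiniteMeasure μ] :
    Continuous fun h : C(Z, ℝ) => ∫ z, h z ∂μ := by
  have hint (h : C(Z, ℝ)) : Integrable h μ :=
    (BoundedContinuousFunction.mkOfCompact h).integrable μ
  refine (LipschitzWith.of_dist_le_mul (K := (μ.real Set.univ).toNNReal) fun h h' => ?_).continuous
  rw [dist_eq_norm, dist_eq_norm, ← integral_sub (hint h) (hint h'),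
    Real.coe_toNNReal _ measureReal_nonneg, mul_comm]
  exact norm_integral_le_of_norm_le_const (.of_forall (h - h').norm_coe_le_norm)

namespace MeasureTheory.Measure

theorem ext_of_integral_mul_of_dense {X Y : Type*}
    [MetricSpace X] [CompactSpace X] [MeasurableSpace X] [BorelSpace X]
    [MetricSpace Y] [CompactSpace Y] [MeasurableSpace Y] [BorelSpace Y]
    {π π' : Measure (X × Y)} [IsFiniteMeasure π] [IsFiniteMeasure π']
    {S : Set C(X, ℝ)} {S' : Set C(Y, ℝ)} (hS : Dense S) (hS' : Dense S')
    (h : ∀ f ∈ S, ∀ g ∈ S', ∫ p, f p.1 * g p.2 ∂π = ∫ p, f p.1 * g p.2 ∂π') : π = π' := by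
  let tensor : C(X, ℝ) × C(Y, ℝ) → C(X × Y, ℝ) := fun fg =>
    fg.1.comp ContinuousMap.fst * fg.2.comp ContinuousMap.snd
  have htensor : Continuous tensor :=
    ((ContinuousMap.continuous_precomp _).comp continuous_fst).mul
      ((ContinuousMap.continuous_precomp _).comp continuous_snd)
  have hall : ∀ fg, ∫ p, tensor fg p ∂π = ∫ p, tensor fg p ∂π' :=
    congrFun <| Continuous.ext_on (hS.prod hS')
      ((ContinuousMap.continuous_integral π).comp htensor)
      ((ContinuousMap.continuous_integral π').comp htensor) fun fg hfg => h _ hfg.1 _ hfg.2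
  exact Measure.ext_of_integral_mul_boundedContinuousFunction fun f g =>
    hall (f.toContinuousMap, g.toContinuousMap)

section

variable {α β : Type*} [MeasurableSpace α] [MeasurableSpace β] {μ : Measure α} {ν : Measure β}
  {f : α → β} {g : β → α}

lemma integral_withDensity_ofReal {ρ : α → ℝ} (hρ : Measurable ρ) (hρ_nonneg : ∀ x, 0 ≤ ρ x)
    (φ : α → ℝ) :
    ∫ x, φ x ∂μ.withDensity (fun x => ENNReal.ofReal (ρ x)) = ∫ x, φ x * ρ x ∂μ := by
  rw [integral_withDensity_eq_integral_toReal_smul hρ.ennreal_ofReal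
    (.of_forall fun _ => ENNReal.ofReal_lt_top)]
  simp_rw [ENNReal.toReal_ofReal (hρ_nonneg _), smul_eq_mul, mul_comm]

lemma map_eq_of_map_prodMk_eq (hf : Measurable f) (hg : Measurable g)
    (h : ν.map (fun y => (g y, y)) = μ.map (fun x => (x, f x))) :
    ν.map g = μ ∧ μ.map f = ν := by
  have hfst := congrArg (map Prod.fst) h
  have hsnd := congrArg (map Prod.snd) h
  simp only [map_map measurable_fst (by fun_prop : Measurable fun y => (g y, y)),
    map_map measurable_snd (by fun_prop : Measurable fun y => (g y, y)),
    map_map measurable_fst (by fun_prop : Measurable fun x => (x, f x)),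
    map_map measurable_snd (by fun_prop : Measurable fun x => (x, f x))] at hfst hsnd
  exact ⟨by simpa [Function.comp_def] using hfst, by simpa [Function.comp_def] using hsnd.symm⟩

lemma ae_comp_eq_of_map_prodMk_eq [MeasurableEq α] [MeasurableEq β] (hf : Measurable f)
    (hg : Measurable g) (h : ν.map (fun y => (g y, y)) = μ.map (fun x => (x, f x))) :
    (∀ᵐ y ∂ν, f (g y) = y) ∧ ∀ᵐ x ∂μ, g (f x) = x := by
  have hgf : AEMeasurable (fun y => (g y, y)) ν := by fun_prop
  have hfg : AEMeasurable (fun x => (x, f x)) μ := by fun_prop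
  have hgraph_f : MeasurableSet {p : α × β | f p.1 = p.2} :=
    measurableSet_eq_fun (by fun_prop) (by fun_prop)
  have hgraph_g : MeasurableSet {p : α × β | g p.2 = p.1} :=
    measurableSet_eq_fun (by fun_prop) (by fun_prop)
  have hf_ae : ∀ᵐ p ∂μ.map (fun x => (x, f x)), f p.1 = p.2 :=
    (ae_map_iff hfg hgraph_f).2 (.of_forall fun _ => rfl)
  have hg_ae : ∀ᵐ p ∂ν.map (fun y => (g y, y)), g p.2 = p.1 :=
    (ae_map_iff hgf hgraph_g).2 (.of_forall fun _ => rfl)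
  rw [← h, ae_map_iff hgf hgraph_f] at hf_ae
  rw [h, ae_map_iff hfg hgraph_g] at hg_ae
  exact ⟨hf_ae, hg_ae⟩

lemma map_withDensity_of_ae_leftInverse (hf : Measurable f) (hg : Measurable g)
    {φ : α → ℝ≥0∞} (hφ : Measurable φ) (hgf : ∀ᵐ x ∂μ, g (f x) = x) :
    (μ.withDensity φ).map f = (μ.map f).withDensity (φ ∘ g) := by
  have hφgf : φ =ᵐ[μ] φ ∘ g ∘ f := by
    filter_upwards [hgf] with x hx
    simp [hx]
  ext s hs
  rw [withDensity_congr_ae hφgf, map_apply hf hs, withDensity_apply _ (hf hs),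
    withDensity_apply _ hs, setLIntegral_map hs (hφ.comp hg) hf]
  rfl

end

end MeasureTheory.Measure

open MeasureTheory.Measure

theorem ae_inverse_of_duality_general {M : Type*} [MetricSpace M] [CompactSpace M]
    [MeasurableSpace M] [BorelSpace M]
    (ν : Measure M) [IsFiniteMeasure ν]
    (T T' : M → M) (hT : Measurable T) (hT' : Measurable T')
    (ρ : M → ℝ) (hρmeas : Measurable ρ) (hρpos : ∀ x, 0 < ρ x)
    (hρint : Integrable ρ ν)
    (S : Set C(M, ℝ)) (hSdense : Dense S)
    (hdual : ∀ f ∈ S, ∀ g ∈ S,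
      ∫ x, f (T' x) * g x ∂ν = ∫ x, f x * g (T x) * ρ x ∂ν) :
    (∀ᵐ x ∂ν, T (T' x) = x) ∧ (∀ᵐ x ∂ν, T' (T x) = x) ∧
      ν.map T' = ν.withDensity (fun x => ENNReal.ofReal (ρ x)) ∧
      ν.map T = ν.withDensity (fun x => ENNReal.ofReal (ρ (T' x))⁻¹) := by
  set μ := ν.withDensity fun x => ENNReal.ofReal (ρ x)
  have : IsFiniteMeasure μ := isFiniteMeasure_withDensity_ofReal hρint.hasFiniteIntegral
  have hcoupling : ν.map (fun x => (T' x, x)) = μ.map (fun x => (x, T x)) := by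
    refine ext_of_integral_mul_of_dense hSdense hSdense fun f hf g hg => ?_
    rw [integral_map (by fun_prop) (by fun_prop), integral_map (by fun_prop) (by fun_prop),
      integral_withDensity_ofReal hρmeas fun x => (hρpos x).le]
    exact hdual f hf g hg
  obtain ⟨hT'_map, hT_map⟩ := map_eq_of_map_prodMk_eq hT hT' hcoupling
  obtain ⟨hTT', hT'T⟩ := ae_comp_eq_of_map_prodMk_eq hT hT' hcoupling
  have hρ_ne_zero : ∀ᵐ x ∂ν, ENNReal.ofReal (ρ x) ≠ 0 :=
    .of_forall fun x => (ENNReal.ofReal_pos.2 (hρpos x)).ne'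
  have hνμ : μ.withDensity (fun x => (ENNReal.ofReal (ρ x))⁻¹) = ν :=
    withDensity_inv_same hρmeas.ennreal_ofReal hρ_ne_zero
      (.of_forall fun _ => ENNReal.ofReal_ne_top)
  refine ⟨hTT', (withDensity_absolutelyContinuous' hρmeas.ennreal_ofReal.aemeasurable
    hρ_ne_zero).ae_le hT'T, hT'_map, ?_⟩
  simp_rw [ENNReal.ofReal_inv_of_pos (hρpos _)]
  calc ν.map T = (μ.withDensity fun x => (ENNReal.ofReal (ρ x))⁻¹).map T := by rw [hνμ]
    _ = (μ.map T).withDensity fun x => (ENNReal.ofReal (ρ (T' x)))⁻¹ :=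
      map_withDensity_of_ae_leftInverse hT hT' (by fun_prop) hT'T
    _ = _ := by rw [hT_map]

/-- If `∫ f(T̂ x) g(x) dν = ∫ f(x) g(T x) ρ(x) dν` for all `f, g` in a countable dense
subset of `C(M)`, then `T̂` is a `ν`-a.e. inverse of `T`, and
`ν ∘ T⁻¹ = ρ ν`, `ν ∘ T = ρ⁻¹(T⁻¹) ν`. -/
theorem ae_inverse_of_duality {M : Type*} [MetricSpace M] [CompactSpace M]
    [MeasurableSpace M] [BorelSpace M]
    (ν : Measure M) [IsFiniteMeasure ν]
    (T T' : M → M) (hT : Measurable T) (hT' : Measurable T')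
    (ρ : M → ℝ) (hρmeas : Measurable ρ) (hρpos : ∀ x, 0 < ρ x)
    (hρint : Integrable ρ ν)
    (S : Set C(M, ℝ)) (hScount : S.Countable) (hSdense : Dense S)
    (hdual : ∀ f ∈ S, ∀ g ∈ S,
      ∫ x, f (T' x) * g x ∂ν = ∫ x, f x * g (T x) * ρ x ∂ν) :
    (∀ᵐ x ∂ν, T (T' x) = x) ∧ (∀ᵐ x ∂ν, T' (T x) = x) ∧
      ν.map T' = ν.withDensity (fun x => ENNReal.ofReal (ρ x)) ∧
      ν.map T = ν.withDensity (fun x => ENNReal.ofReal (ρ (T' x))⁻¹) :=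
  ae_inverse_of_duality_general ν T T' hT hT' ρ hρmeas hρpos hρint S hSdense hdual
end

section
/- Let Φ_{n,m} ≥ 0 be measurable functions on a finite measure space (M,ν), bounded by D², and δ_{n,m} > 0 with δ_{n,m} → 0 as n,m → ∞. Suppose sup_{n,m} ∫_M log(Φ_{n,m}/δ_{n,m} + 1) dν ≤ C₀. Then lim_{n,m→∞} ∫_M Φ_{n,m} dν = 0. -/
/-!
Split `M` at the level `δ (e^R - 1)`: above it `log (Φ/δ + 1) ≥ R`, so there
`Φ ≤ D² ≤ (D²/R) log (Φ/δ + 1)`. Integrating gives `∫ Φ ≤ D² C₀ / R + δ (e^R - 1) ν(M)` for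
every `R > 0`; letting first `δ → 0` and then `R → ∞` shows `∫ Φ → 0`.
-/

open MeasureTheory Filter Topology

lemma le_div_mul_log_div_add_one_add {B R d φ : ℝ} (hR : 0 < R) (hd : 0 < d)
    (hφ0 : 0 ≤ φ) (hφB : φ ≤ B) :
    φ ≤ B / R * Real.log (φ / d + 1) + d * (Real.exp R - 1) := by
  have hlog : 0 ≤ Real.log (φ / d + 1) := Real.log_nonneg (by linarith [div_nonneg hφ0 hd.le])
  have hBR : 0 ≤ B / R := div_nonneg (hφ0.trans hφB) hR.le
  rcases le_or_gt φ (d * (Real.exp R - 1)) with hsmall | hlarge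
  · nlinarith [mul_nonneg hBR hlog]
  · have hRlog : R ≤ Real.log (φ / d + 1) := by
      rw [Real.le_log_iff_exp_le (by positivity)]
      linarith [(lt_div_iff₀' hd).2 hlarge]
    have hB : B ≤ B / R * Real.log (φ / d + 1) :=
      calc B = B / R * R := (div_mul_cancel₀ B hR.ne').symm
        _ ≤ B / R * Real.log (φ / d + 1) := mul_le_mul_of_nonneg_left hRlog hBR
    nlinarith [Real.add_one_le_exp R]

lemma integral_le_div_mul_integral_log_div_add_one_add {M : Type*} [MeasurableSpace M]
    {ν : Measure M} [IsFiniteMeasure ν] {f : M → ℝ} {B R d : ℝ} (hf : AEStronglyMeasurable f ν)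
    (hf0 : ∀ x, 0 ≤ f x) (hfB : ∀ x, f x ≤ B) (hR : 0 < R) (hd : 0 < d) :
    ∫ x, f x ∂ν ≤
      B / R * ∫ x, Real.log (f x / d + 1) ∂ν
        + d * (Real.exp R - 1) * ν.real Set.univ := by
  have hf_int : Integrable f ν :=
    Integrable.of_bound hf B (Eventually.of_forall fun x => by
      rw [Real.norm_of_nonneg (hf0 x)]; exact hfB x)
  have hlog_int : Integrable (fun x => Real.log (f x / d + 1)) ν := by
    have hmeas : AEMeasurable (fun x => f x / d + 1) ν :=
      (hf.aemeasurable.div_const d).add_const 1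
    refine Integrable.of_bound (Real.measurable_log.comp_aemeasurable hmeas).aestronglyMeasurable
      (B / d) (Eventually.of_forall fun x => ?_)
    have hq : 0 ≤ f x / d := div_nonneg (hf0 x) hd.le
    rw [Real.norm_of_nonneg (Real.log_nonneg (by linarith))]
    linarith [Real.log_le_sub_one_of_pos (show 0 < f x / d + 1 by linarith),
      div_le_div_of_nonneg_right (hfB x) hd.le]
  calc ∫ x, f x ∂ν
      ≤ ∫ x, (B / R * Real.log (f x / d + 1) + d * (Real.exp R - 1)) ∂ν :=
        integral_mono hf_int ((hlog_int.const_mul _).add (integrable_const _))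
          fun x => le_div_mul_log_div_add_one_add hR hd (hf0 x) (hfB x)
    _ = B / R * ∫ x, Real.log (f x / d + 1) ∂ν + d * (Real.exp R - 1) * ν.real Set.univ := by
        rw [integral_add (hlog_int.const_mul _) (integrable_const _), integral_const_mul,
          integral_const, smul_eq_mul]
        ring

lemma tendsto_zero_of_forall_le_div_add_mul {ι : Type*} {l : Filter ι} {a δ : ι → ℝ}
    {A : ℝ} (K : ℝ → ℝ) (hδ : Tendsto δ l (𝓝 0)) (ha0 : ∀ i, 0 ≤ a i)
    (ha : ∀ R > 0, ∀ i, a i ≤ A / R + δ i * K R) :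
    Tendsto a l (𝓝 0) := by
  refine tendsto_order.2 ⟨fun ε hε => Eventually.of_forall fun i => hε.trans_le (ha0 i),
    fun ε hε => ?_⟩
  obtain ⟨R, hR, hAR⟩ : ∃ R > 0, A / R < ε / 2 :=
    ((eventually_gt_atTop 0).and ((tendsto_const_nhds.div_atTop tendsto_id).eventually
      (gt_mem_nhds (half_pos hε)))).exists
  have hδK : ∀ᶠ i in l, δ i * K R < ε / 2 := by
    have : Tendsto (fun i => δ i * K R) l (𝓝 0) := by simpa using hδ.mul_const (K R)
    exact this.eventually (gt_mem_nhds (half_pos hε))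
  filter_upwards [hδK] with i hi
  linarith [ha R hR i]

/-- Cauchy-sequence argument: if `0 ≤ Φ_{n,m} ≤ D²`, `δ_{n,m} → 0` and
`sup_{n,m} ∫ log(Φ_{n,m}/δ_{n,m} + 1) dν ≤ C₀`, then `∫ Φ_{n,m} dν → 0` as `n,m → ∞`. -/
theorem log_estimate_implies_L1_convergence {M : Type*} [MeasurableSpace M]
    (ν : Measure M) [IsFiniteMeasure ν]
    (Φ : ℕ → ℕ → M → ℝ) (hΦmeas : ∀ n m, Measurable (Φ n m))
    (D : ℝ)
    (hΦ0 : ∀ n m x, 0 ≤ Φ n m x) (hΦD : ∀ n m x, Φ n m x ≤ D ^ 2)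
    (δ : ℕ → ℕ → ℝ) (hδpos : ∀ n m, 0 < δ n m)
    (hδ0 : Tendsto (fun p : ℕ × ℕ => δ p.1 p.2) atTop (𝓝 0))
    (C₀ : ℝ)
    (hlog : ∀ n m, ∫ x, Real.log (Φ n m x / δ n m + 1) ∂ν ≤ C₀) :
    Tendsto (fun p : ℕ × ℕ => ∫ x, Φ p.1 p.2 x ∂ν) atTop (𝓝 0) := by
  refine tendsto_zero_of_forall_le_div_add_mul (A := D ^ 2 * C₀)
    (fun R => (Real.exp R - 1) * ν.real Set.univ) hδ0
    (fun p => integral_nonneg (hΦ0 p.1 p.2)) fun R hR ⟨n, m⟩ => ?_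
  calc ∫ x, Φ n m x ∂ν
      ≤ D ^ 2 / R * ∫ x, Real.log (Φ n m x / δ n m + 1) ∂ν
          + δ n m * (Real.exp R - 1) * ν.real Set.univ :=
        integral_le_div_mul_integral_log_div_add_one_add (hΦmeas n m).aestronglyMeasurable
          (hΦ0 n m) (hΦD n m) hR (hδpos n m)
    _ ≤ D ^ 2 / R * C₀ + δ n m * (Real.exp R - 1) * ν.real Set.univ := by
        gcongr
        exact hlog n m
    _ = D ^ 2 * C₀ / R + δ n m * ((Real.exp R - 1) * ν.real Set.univ) := by ring
end
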